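/- If R ≡ 0, then the generalized Neumann eigenvalue λ(Ω) equals 0 whenever both A and B have positive measure; specifically, the function u equal to n/|A| on A and −n/|B| on B has zero average, nonzero L² norm, and zero nonlocal energy (1/2)Φ(A,A,J)u + Φ(A,B,R)u + (1/2)Φ(B,B,G)u = 0. -/

import Mathlib

open MeasureTheory Classical

/-! The test function is constant on each of `A` and `B`, so every difference `u y - u x` with
`x, y` in the same piece vanishes; only the cross term `Φ(A,B,R)` could see the jump, and it is
killed by `R = 0`. The levels `n/|A|` and `-n/|B|` are chosen so that the two pieces cancel in
the mean. -/

section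

variable {X : Type*} [MeasurableSpace X] {μ : Measure X}

lemma ae_restrict_ite_mem_eq_of_disjoint {A B : Set X} (hA : MeasurableSet A)
    (hAB : Disjoint A B) (a b : ℝ) :
    ∀ᵐ x ∂μ.restrict B, (if x ∈ A then a else b) = b := by
  have hAc : ∀ᵐ x ∂μ.restrict B, x ∉ A := measure_eq_zero_iff_ae_notMem.mp <| by
    rw [Measure.restrict_apply hA, hAB.inter_eq, measure_empty]
  filter_upwards [hAc] with x hx
  simp [hx]

lemma setIntegral_eq_measureReal_mul_of_ae_eq_const {s : Set X} {f : X → ℝ} {c : ℝ}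
    (hf : ∀ᵐ x ∂μ.restrict s, f x = c) : ∫ x in s, f x ∂μ = μ.real s * c := by
  rw [integral_congr_ae hf, setIntegral_const, smul_eq_mul]

lemma integrableOn_of_ae_eq_const {s : Set X} {f : X → ℝ} {c : ℝ} (hs : μ s ≠ ⊤)
    (hf : ∀ᵐ x ∂μ.restrict s, f x = c) : IntegrableOn f s μ :=
  (integrableOn_const hs).congr_fun_ae (hf.mono fun _ hx => hx.symm)

lemma setIntegral_union_eq_of_ae_eq_const {A B : Set X} {f : X → ℝ} {a b : ℝ}
    (hA : MeasurableSet A) (hAB : Disjoint A B) (hAfin : μ A ≠ ⊤) (hBfin : μ B ≠ ⊤)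
    (hfA : ∀ᵐ x ∂μ.restrict A, f x = a) (hfB : ∀ᵐ x ∂μ.restrict B, f x = b) :
    ∫ x in A ∪ B, f x ∂μ = μ.real A * a + μ.real B * b := by
  rw [Set.union_comm, setIntegral_union hAB.symm hA (integrableOn_of_ae_eq_const hBfin hfB)
    (integrableOn_of_ae_eq_const hAfin hfA), setIntegral_eq_measureReal_mul_of_ae_eq_const hfA,
    setIntegral_eq_measureReal_mul_of_ae_eq_const hfB, add_comm]

lemma setIntegral_setIntegral_mul_sq_sub_eq_zero {s : Set X} {u : X → ℝ} {c : ℝ}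
    (hu : ∀ᵐ x ∂μ.restrict s, u x = c) (K : X → X → ℝ) :
    ∫ x in s, ∫ y in s, K x y * (u y - u x) ^ 2 ∂μ ∂μ = 0 := by
  refine integral_eq_zero_of_ae ?_
  filter_upwards [hu] with x hx
  refine integral_eq_zero_of_ae ?_
  filter_upwards [hu] with y hy
  simp [hx, hy]

end

theorem stmt_2_general {N : ℕ}
    (Ω A B : Set (EuclideanSpace ℝ (Fin N)))
    (hΩb : Bornology.IsBounded Ω)
    (hA : MeasurableSet A)
    (hUnion : A ∪ B = Ω) (hdisj : A ∩ B = ∅)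
    (hApos : 0 < volume A) (hBpos : 0 < volume B)
    (J G : EuclideanSpace ℝ (Fin N) → EuclideanSpace ℝ (Fin N) → ℝ)
    (n : ℝ) (hn : n ≠ 0)
    (u : EuclideanSpace ℝ (Fin N) → ℝ)
    (hu : u = fun x => if x ∈ A then n / (volume A).toReal
                       else -(n / (volume B).toReal)) :
    (∫ x in Ω, u x) = 0 ∧
    (∫ x in Ω, (u x) ^ 2) ≠ 0 ∧
    (1 / 2) * (∫ x in A, ∫ y in A, J x y * (u y - u x) ^ 2)
      + (∫ x in A, ∫ y in B, (0 : ℝ) * (u y - u x) ^ 2)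
      + (1 / 2) * (∫ x in B, ∫ y in B, G x y * (u y - u x) ^ 2) = 0 := by
  have hΩfin : volume Ω < ⊤ := hΩb.measure_lt_top
  have hAfin : volume A ≠ ⊤ :=
    ((measure_mono (hUnion ▸ Set.subset_union_left)).trans_lt hΩfin).ne
  have hBfin : volume B ≠ ⊤ :=
    ((measure_mono (hUnion ▸ Set.subset_union_right)).trans_lt hΩfin).ne
  have ha : 0 < volume.real A := ENNReal.toReal_pos hApos.ne' hAfin
  have hb : 0 < volume.real B := ENNReal.toReal_pos hBpos.ne' hBfin
  have hAB : Disjoint A B := Set.disjoint_iff_inter_eq_empty.mpr hdisj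
  have huA : ∀ᵐ x ∂volume.restrict A, u x = n / volume.real A := by
    filter_upwards [ae_restrict_mem hA] with x hx
    simp [hu, hx, measureReal_def]
  have huB : ∀ᵐ x ∂volume.restrict B, u x = -(n / volume.real B) := by
    simpa [hu, measureReal_def] using ae_restrict_ite_mem_eq_of_disjoint (μ := volume) hA hAB
      (n / (volume A).toReal) (-(n / (volume B).toReal))
  subst hUnion
  refine ⟨?_, ?_, ?_⟩
  · rw [setIntegral_union_eq_of_ae_eq_const hA hAB hAfin hBfin huA huB]
    field_simp
    ring
  · rw [setIntegral_union_eq_of_ae_eq_const hA hAB hAfin hBfin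
      (huA.mono fun _ hx => congrArg (· ^ 2) hx) (huB.mono fun _ hx => congrArg (· ^ 2) hx)]
    positivity
  · simp [setIntegral_setIntegral_mul_sq_sub_eq_zero huA,
      setIntegral_setIntegral_mul_sq_sub_eq_zero huB]

theorem stmt_2 {N : ℕ}
    (Ω A B : Set (EuclideanSpace ℝ (Fin N)))
    (hΩb : Bornology.IsBounded Ω)
    (hA : MeasurableSet A) (hB : MeasurableSet B)
    (hUnion : A ∪ B = Ω) (hdisj : A ∩ B = ∅)
    (hApos : 0 < volume A) (hBpos : 0 < volume B)
    (J G : EuclideanSpace ℝ (Fin N) → EuclideanSpace ℝ (Fin N) → ℝ)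
    (n : ℝ) (hn : n ≠ 0)
    (u : EuclideanSpace ℝ (Fin N) → ℝ)
    (hu : u = fun x => if x ∈ A then n / (volume A).toReal
                       else -(n / (volume B).toReal)) :
    (∫ x in Ω, u x) = 0 ∧
    (∫ x in Ω, (u x) ^ 2) ≠ 0 ∧
    (1 / 2) * (∫ x in A, ∫ y in A, J x y * (u y - u x) ^ 2)
      + (∫ x in A, ∫ y in B, (0 : ℝ) * (u y - u x) ^ 2)
      + (1 / 2) * (∫ x in B, ∫ y in B, G x y * (u y - u x) ^ 2) = 0 :=
  stmt_2_general Ω A B hΩb hA hUnion hdisj hApos hBpos J G n hn u hu
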